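/- arXiv:1108.0129 — 2 statements merged into one kernel-verified Lean document; each statement's English description precedes it below -/
import Mathlib

section
/- Let T be a finite tree with positive edge weights, r ≥ 2 an integer, and let σ : V → {1,…,r} be distributed according to the r-state Poisson model D[T,r]. Let Υ = {(a₁,b₁),…,(a_υ,b_υ)} be pairs of distinct leaves such that for all distinct pairs (a,b) ≠ (a',b') in Υ, the edge sets of the paths Path(a,b) and Path(a',b') are disjoint. Then the random variables 1{σ_{a₁} = σ_{b₁}}, …, 1{σ_{a_υ} = σ_{b_υ}} are mutually independent. -/
open scoped Classical
open Real

noncomputable section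

namespace RAS

variable {V : Type}

/-- The canonical path (as a walk) between two vertices of a tree. -/
def tpath (G : SimpleGraph V) [DecidableEq V] (hG : G.IsTree) (u v : V) : G.Walk u v :=
  ((Classical.choice (hG.isConnected.preconnected u v)).toPath : G.Path u v).1

/-- Tree metric: sum of edge weights along the path. -/
def tdist (G : SimpleGraph V) [DecidableEq V] (hG : G.IsTree) (w : Sym2 V → ℝ) (u v : V) : ℝ :=
  ((tpath G hG u v).edges.map w).sum

/-- Edges of the canonical path. -/
def pathEdges (G : SimpleGraph V) [DecidableEq V] (hG : G.IsTree) (u v : V) :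
    List (Sym2 V) :=
  (tpath G hG u v).edges

/-- A leaf is a vertex of degree 1. -/
def IsLeaf (G : SimpleGraph V) (v : V) : Prop := (G.neighborSet v).ncard = 1

/-- A symmetric edge factor depending on whether the endpoint states agree. -/
def agreeIf {α : Type} (σ : V → α) (A B : ℝ) : Sym2 V → ℝ :=
  Sym2.lift ⟨fun u v => if σ u = σ v then A else B, fun u v => by
    simp only []
    by_cases h : σ u = σ v
    · rw [if_pos h, if_pos h.symm]
    · rw [if_neg h, if_neg (fun hh => h hh.symm)]⟩

/-- Probability mass function of the `r`-state Poisson model on a weighted tree. -/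
def poissonPMF (G : SimpleGraph V) [Fintype V] [DecidableEq V]
    (w : Sym2 V → ℝ) (r : ℕ) (σ : V → Fin r) : ℝ :=
  (r : ℝ)⁻¹ * ∏ e ∈ (Set.toFinite G.edgeSet).toFinset,
      agreeIf σ ((r : ℝ)⁻¹ + (1 - (r : ℝ)⁻¹) * exp (-(w e)))
        ((r : ℝ)⁻¹ * (1 - exp (-(w e)))) e

/-- Probability of an event under a pmf on a finite configuration space. -/
def fprob {Ω : Type} [Fintype Ω] (p : Ω → ℝ) (A : Set Ω) : ℝ :=
  ∑ ω : Ω, if ω ∈ A then p ω else 0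

end RAS

/-!
Root the tree at a vertex `ρ` and replace a configuration `σ` by its increments
`η v = σ v - σ (parent v)` in `ℤ/r` (with `η ρ = σ ρ`). This is a bijection, and the Poisson mass
factorizes over it: the increments are independent, `η ρ` is uniform and `η v = 0` with
probability `1/r + (1 - 1/r) e^{-μ}` for the edge from `v` to its parent. Telescoping along
`Path(a, b)` shows that `σ a - σ b`, hence the event `σ a = σ b`, depends only on the increments
at the lower endpoints of the edges of the path. Edge-disjoint paths therefore give events
determined by disjoint sets of independent coordinates.
-/

namespace RAS

open Function

section PiWeight

variable {ι κ : Type} [Fintype ι] [DecidableEq ι] [Fintype κ]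

def piWeight (μ : ι → κ → ℝ) (η : ι → κ) : ℝ := ∏ i, μ i (η i)

lemma fprob_comp_equiv {Ω Ω' : Type} [Fintype Ω] [Fintype Ω'] (e : Ω ≃ Ω') (p : Ω' → ℝ)
    (A : Set Ω') : fprob (p ∘ e) (e ⁻¹' A) = fprob p A :=
  e.sum_comp fun ω => if ω ∈ A then p ω else 0

lemma fprob_univ_piWeight {μ : ι → κ → ℝ} (hμ : ∀ i, ∑ k, μ i k = 1) :
    fprob (piWeight μ) Set.univ = 1 := by
  simp only [fprob, Set.mem_univ, if_true, piWeight, ← Fintype.prod_sum, hμ,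
    Finset.prod_const_one]

lemma fprob_prod_mul {X Y : Type} [Fintype X] [Fintype Y] (p : X → ℝ) (q : Y → ℝ)
    (A : Set X) (B : Set Y) :
    fprob (fun z : X × Y => p z.1 * q z.2) (A ×ˢ B) = fprob p A * fprob q B := by
  simp only [fprob, Fintype.sum_prod_type, Finset.sum_mul_sum, Set.mem_prod]
  refine Finset.sum_congr rfl fun x _ => Finset.sum_congr rfl fun y _ => ?_
  by_cases hx : x ∈ A <;> by_cases hy : y ∈ B <;> simp [hx, hy]

lemma fprob_piWeight_inter_of_dependsOn {μ : ι → κ → ℝ}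
    (hμ : ∀ i, ∑ k, μ i k = 1) {C : Set ι} {A B : Set (ι → κ)}
    (hA : DependsOn (· ∈ A) C) (hB : DependsOn (· ∈ B) Cᶜ) :
    fprob (piWeight μ) (A ∩ B) = fprob (piWeight μ) A * fprob (piWeight μ) B := by
  let e := Equiv.piEquivPiSubtypeProd (· ∈ C) fun _ => κ
  have hsplit : piWeight μ =
      (fun z => piWeight (fun i : C => μ i) z.1 * piWeight (fun i : ↥Cᶜ => μ i) z.2) ∘ e :=
    funext fun η => (Fintype.prod_subtype_mul_prod_subtype (· ∈ C) fun i => μ i (η i)).symm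
  have hprod : ∀ A' B', fprob (piWeight μ) (e ⁻¹' A' ×ˢ B') =
      fprob (piWeight fun i : C => μ i) A' * fprob (piWeight fun i : ↥Cᶜ => μ i) B' := by
    intro A' B'
    rw [hsplit, fprob_comp_equiv, fprob_prod_mul]
  obtain ⟨f, hf⟩ := dependsOn_iff_exists_comp.mp hA
  obtain ⟨g, hg⟩ := dependsOn_iff_exists_comp.mp hB
  have hA' : A = e ⁻¹' {x | f x} ×ˢ Set.univ := by
    ext η; simp [e, congrFun hf η]; rfl
  have hB' : B = e ⁻¹' Set.univ ×ˢ {y | g y} := by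
    ext η; simp [e, congrFun hg η]; rfl
  have hAB : A ∩ B = e ⁻¹' {x | f x} ×ˢ {y | g y} := by
    rw [hA', hB', ← Set.preimage_inter, Set.prod_inter_prod, Set.inter_univ, Set.univ_inter]
  rw [hAB, hA', hB', hprod, hprod, hprod, fprob_univ_piWeight fun _ => hμ _,
    fprob_univ_piWeight fun _ => hμ _, mul_one, one_mul]

lemma fprob_piWeight_forall_mem {α : Type} {μ : ι → κ → ℝ} (hμ : ∀ i, ∑ k, μ i k = 1)
    {E : α → Set (ι → κ)} {C : α → Set ι} (hE : ∀ j, DependsOn (· ∈ E j) (C j))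
    (hC : Pairwise (Disjoint on C)) (S : Finset α) :
    fprob (piWeight μ) {η | ∀ j ∈ S, η ∈ E j} = ∏ j ∈ S, fprob (piWeight μ) (E j) := by
  induction S using Finset.induction_on with
  | empty => simpa using fprob_univ_piWeight hμ
  | insert i S hi ih =>
    have hsplit : {η | ∀ j ∈ insert i S, η ∈ E j} = E i ∩ {η | ∀ j ∈ S, η ∈ E j} := by
      ext η; simp
    have hrest : DependsOn (· ∈ {η | ∀ j ∈ S, η ∈ E j}) (C i)ᶜ := fun η η' h =>
      propext <| forall₂_congr fun j hj => (hE j fun k hk =>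
        h k ((hC (ne_of_mem_of_not_mem hj hi)).notMem_of_mem_left hk)).to_iff
    rw [hsplit, fprob_piWeight_inter_of_dependsOn hμ (hE i) hrest, ih, Finset.prod_insert hi]

end PiWeight

section RootedTree

variable {V : Type} [DecidableEq V] {G : SimpleGraph V} (hG : G.IsTree) (ρ : V)

lemma isPath_tpath (u v : V) : (tpath G hG u v).IsPath :=
  (Classical.choice (hG.connected.preconnected u v)).toPath.2

lemma eq_tpath_of_isPath {u v : V} {p : G.Walk u v} (hp : p.IsPath) : p = tpath G hG u v :=
  congrArg Subtype.val <|
    (hG.isAcyclic.subsingleton_path u v).elim ⟨p, hp⟩ ⟨_, isPath_tpath hG u v⟩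

lemma length_tpath (u v : V) : (tpath G hG u v).length = G.dist u v := by
  obtain ⟨p, hp⟩ := hG.connected.exists_walk_length_eq_dist u v
  rw [← eq_tpath_of_isPath hG (p.isPath_of_length_eq_dist hp), hp]

def parent (v : V) : V := (tpath G hG v ρ).getVert 1

lemma parent_eq_of_adj {u v : V} (h : G.Adj u v) (hd : G.dist u ρ = G.dist v ρ + 1) :
    parent hG ρ u = v := by
  have hpath : (SimpleGraph.Walk.cons h (tpath G hG v ρ)).IsPath :=
    SimpleGraph.Walk.isPath_of_length_eq_dist _ (by
      rw [SimpleGraph.Walk.length_cons, length_tpath, hd])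
  rw [parent, ← eq_tpath_of_isPath hG hpath, SimpleGraph.Walk.getVert_cons_succ,
    SimpleGraph.Walk.getVert_zero]

lemma adj_parent_and_dist_parent {v : V} (hv : v ≠ ρ) :
    G.Adj v (parent hG ρ v) ∧ G.dist v ρ = G.dist (parent hG ρ v) ρ + 1 := by
  cases hp : tpath G hG v ρ with
  | nil => exact absurd rfl hv
  | @cons _ u _ h q =>
    have hq : q = tpath G hG u ρ := eq_tpath_of_isPath hG
      ((hp ▸ isPath_tpath hG v ρ : (SimpleGraph.Walk.cons h q).IsPath).of_cons)
    have hpar : parent hG ρ v = u := by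
      rw [parent, hp, SimpleGraph.Walk.getVert_cons_succ, SimpleGraph.Walk.getVert_zero]
    rw [hpar, ← length_tpath hG, ← length_tpath hG, hp, SimpleGraph.Walk.length_cons, hq]
    exact ⟨h, rfl⟩

lemma parent_eq_or_parent_eq_of_adj {u v : V} (h : G.Adj u v) :
    (u ≠ ρ ∧ parent hG ρ u = v) ∨ (v ≠ ρ ∧ parent hG ρ v = u) := by
  have ne_root {x : V} {n : ℕ} (hx : G.dist x ρ = n + 1) : x ≠ ρ := by
    rintro rfl; simp at hx
  rcases hG.dist_eq_dist_add_one_of_adj ρ h with hd | hd <;>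
    rw [SimpleGraph.dist_comm, SimpleGraph.dist_comm (u := ρ)] at hd
  · exact Or.inl ⟨ne_root hd, parent_eq_of_adj hG ρ h hd⟩
  · exact Or.inr ⟨ne_root hd, parent_eq_of_adj hG ρ h.symm hd⟩

lemma prod_edgeSet_eq_prod_parent [Fintype V] {M : Type} [CommMonoid M] (F : Sym2 V → M) :
    ∏ e ∈ (Set.toFinite G.edgeSet).toFinset, F e =
      ∏ v ∈ Finset.univ.erase ρ, F s(v, parent hG ρ v) := by
  symm
  refine Finset.prod_nbij (fun v => s(v, parent hG ρ v)) ?_ ?_ ?_ fun _ _ => rfl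
  · intro v hv
    simpa using (adj_parent_and_dist_parent hG ρ (Finset.ne_of_mem_erase hv)).1
  · intro v hv v' hv' he
    have hd := (adj_parent_and_dist_parent hG ρ (Finset.ne_of_mem_erase hv)).2
    have hd' := (adj_parent_and_dist_parent hG ρ (Finset.ne_of_mem_erase hv')).2
    rcases Sym2.eq_iff.mp he with ⟨h, _⟩ | ⟨h, h'⟩
    · exact h
    · rw [h'] at hd; rw [← h] at hd'; omega
  · intro e he
    induction e using Sym2.ind with
    | _ u v =>
      rcases parent_eq_or_parent_eq_of_adj hG ρ (by simpa using he) with ⟨hu, hp⟩ | ⟨hv, hp⟩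
      · exact ⟨u, by simpa using hu, by simp [hp]⟩
      · exact ⟨v, by simpa using hv, by simp [hp, Sym2.eq_swap]⟩

def lowerEnds {x y : V} (p : G.Walk x y) : Set V :=
  {v | v ≠ ρ ∧ s(v, parent hG ρ v) ∈ p.edges}

lemma lowerEnds_disjoint {x y x' y' : V} {p : G.Walk x y} {q : G.Walk x' y'}
    (h : p.edges.Disjoint q.edges) : Disjoint (lowerEnds hG ρ p) (lowerEnds hG ρ q) :=
  Set.disjoint_left.mpr fun _ hp hq => h hp.2 hq.2

variable {α : Type} [AddGroup α]

def increments (σ : V → α) (v : V) : α :=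
  if v = ρ then σ ρ else σ v - σ (parent hG ρ v)

lemma sub_eq_sub_of_eqOn_increments {σ τ : V → α} {x y : V} (p : G.Walk x y)
    (h : Set.EqOn (increments hG ρ σ) (increments hG ρ τ) (lowerEnds hG ρ p)) :
    σ x - σ y = τ x - τ y := by
  induction p with
  | nil => simp
  | @cons x z y hxz q ih =>
    have hq : σ z - σ y = τ z - τ y :=
      ih fun v hv => h ⟨hv.1, SimpleGraph.Walk.edges_cons hxz q ▸ List.mem_cons_of_mem _ hv.2⟩
    have hstep : σ x - σ z = τ x - τ z := by
      rcases parent_eq_or_parent_eq_of_adj hG ρ hxz with ⟨hx, hp⟩ | ⟨hz, hp⟩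
      · simpa [increments, hx, hp] using h (x := x) ⟨hx, by simp [hp]⟩
      · have hzx : σ z - σ x = τ z - τ x := by
          simpa [increments, hz, hp] using h (x := z) ⟨hz, by simp [hp, Sym2.eq_swap]⟩
        rw [← neg_sub, hzx, neg_sub]
    rw [← sub_add_sub_cancel, hstep, hq, sub_add_sub_cancel]

lemma increments_injective : Function.Injective (increments hG ρ : (V → α) → V → α) := by
  intro σ τ h
  funext v
  have hρ : σ ρ = τ ρ := by simpa [increments] using congrFun h ρ
  have hv := sub_eq_sub_of_eqOn_increments hG ρ (tpath G hG v ρ) fun u _ => congrFun h u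
  rwa [hρ, sub_left_inj] at hv

end RootedTree

section IncrementCoordinates

variable {V : Type} [DecidableEq V] {G : SimpleGraph V} (hG : G.IsTree) (ρ : V)

section Equiv

variable [Fintype V] (α : Type) [AddGroup α] [Finite α]

def incrementsEquiv : (V → α) ≃ (V → α) :=
  Equiv.ofBijective _ (Finite.injective_iff_bijective.mp (increments_injective hG ρ))

lemma incrementsEquiv_apply (σ : V → α) : incrementsEquiv hG ρ α σ = increments hG ρ σ := rfl

lemma increments_incrementsEquiv_symm (η : V → α) :
    increments hG ρ ((incrementsEquiv hG ρ α).symm η) = η :=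
  (incrementsEquiv hG ρ α).apply_symm_apply η

lemma dependsOn_agree_incrementsEquiv_symm {x y : V} (p : G.Walk x y) :
    DependsOn (· ∈ (incrementsEquiv hG ρ α).symm ⁻¹' {σ | σ x = σ y}) (lowerEnds hG ρ p) := by
  intro η η' h
  have hsub := sub_eq_sub_of_eqOn_increments hG ρ p
    (σ := (incrementsEquiv hG ρ α).symm η) (τ := (incrementsEquiv hG ρ α).symm η') fun v hv => by
      simpa only [increments_incrementsEquiv_symm] using h v hv
  change (_ = _) = (_ = _)
  rw [← sub_eq_zero (a := (_ : V → α) x), hsub, sub_eq_zero]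

end Equiv

variable (w : Sym2 V → ℝ) (r : ℕ) [NeZero r]

def poissonIncrementWeight (v : V) (k : Fin r) : ℝ :=
  if v = ρ then (r : ℝ)⁻¹
  else if k = 0 then (r : ℝ)⁻¹ + (1 - (r : ℝ)⁻¹) * exp (-w s(v, parent hG ρ v))
  else (r : ℝ)⁻¹ * (1 - exp (-w s(v, parent hG ρ v)))

lemma sum_poissonIncrementWeight (v : V) : ∑ k, poissonIncrementWeight hG ρ w r v k = 1 := by
  have hr : (r : ℝ) ≠ 0 := Nat.cast_ne_zero.mpr (NeZero.ne r)
  by_cases hv : v = ρ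
  · simp [poissonIncrementWeight, hv, hr]
  · set q := exp (-w s(v, parent hG ρ v)) with hq
    have hsplit : ∀ k : Fin r, poissonIncrementWeight hG ρ w r v k =
        (r : ℝ)⁻¹ * (1 - q) + if k = 0 then q else 0 := by
      intro k
      by_cases hk : k = 0
      · simp only [poissonIncrementWeight, hv, hk, if_false, if_true]; ring
      · simp only [poissonIncrementWeight, hv, hk, if_false, add_zero, hq]
    simp only [hsplit, Finset.sum_add_distrib, Finset.sum_const, Finset.card_univ,
      Fintype.card_fin, nsmul_eq_mul, Finset.sum_ite_eq', Finset.mem_univ, if_true]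
    field_simp
    ring

variable [Fintype V]

lemma poissonPMF_eq_piWeight (σ : V → Fin r) :
    poissonPMF G w r σ =
      piWeight (poissonIncrementWeight hG ρ w r) (incrementsEquiv hG ρ (Fin r) σ) := by
  rw [poissonPMF, piWeight, ← Finset.mul_prod_erase _ _ (Finset.mem_univ ρ),
    prod_edgeSet_eq_prod_parent hG ρ]
  congr 1
  · simp [poissonIncrementWeight]
  · refine Finset.prod_congr rfl fun v hv => ?_
    have hv := Finset.ne_of_mem_erase hv
    simp [poissonIncrementWeight, incrementsEquiv_apply, increments, hv, agreeIf, sub_eq_zero]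

lemma fprob_poissonPMF (X : Set (V → Fin r)) :
    fprob (poissonPMF G w r) X =
      fprob (piWeight (poissonIncrementWeight hG ρ w r))
        ((incrementsEquiv hG ρ (Fin r)).symm ⁻¹' X) := by
  rw [← fprob_comp_equiv (incrementsEquiv hG ρ (Fin r)) (piWeight _),
    Equiv.preimage_symm_preimage]
  exact congrArg₂ _ (funext (poissonPMF_eq_piWeight hG ρ w r)) rfl

end IncrementCoordinates

end RAS

theorem agreement_independence_general
    {V : Type} [Fintype V] [DecidableEq V] (G : SimpleGraph V) (hG : G.IsTree)
    (w : Sym2 V → ℝ)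
    (r : ℕ) (hr : 2 ≤ r)
    (υ : ℕ) (a b : Fin υ → V)
    (hdisj : ∀ i j, i ≠ j →
      List.Disjoint (RAS.pathEdges G hG (a i) (b i)) (RAS.pathEdges G hG (a j) (b j))) :
    ∀ S : Finset (Fin υ),
      RAS.fprob (RAS.poissonPMF G w r) {σ : V → Fin r | ∀ i ∈ S, σ (a i) = σ (b i)} =
        ∏ i ∈ S, RAS.fprob (RAS.poissonPMF G w r) {σ : V → Fin r | σ (a i) = σ (b i)} := by
  have : NeZero r := ⟨by omega⟩
  obtain ⟨ρ⟩ := hG.connected.nonempty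
  intro S
  simp only [RAS.fprob_poissonPMF hG ρ]
  exact RAS.fprob_piWeight_forall_mem (RAS.sum_poissonIncrementWeight hG ρ w r)
    (fun i => RAS.dependsOn_agree_incrementsEquiv_symm hG ρ (Fin r) (RAS.tpath G hG (a i) (b i)))
    (fun i j hij => RAS.lowerEnds_disjoint hG ρ (hdisj i j hij)) S

/-- Under the `r`-state Poisson model on a finite weighted
tree, if the paths joining the pairs `(a_i, b_i)` of distinct leaves are
pairwise edge-disjoint, then the indicator random variables
`1{σ_{a_i} = σ_{b_i}}` are mutually independent; equivalently, for every
subset `S` of the indices the probability of joint agreement factorizes. -/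
theorem agreement_independence
    {V : Type} [Fintype V] [DecidableEq V] (G : SimpleGraph V) (hG : G.IsTree)
    (w : Sym2 V → ℝ) (hw : ∀ e ∈ G.edgeSet, 0 < w e)
    (r : ℕ) (hr : 2 ≤ r)
    (υ : ℕ) (a b : Fin υ → V)
    (hleaf : ∀ i, RAS.IsLeaf G (a i) ∧ RAS.IsLeaf G (b i))
    (hne : ∀ i, a i ≠ b i)
    (hdisj : ∀ i j, i ≠ j →
      List.Disjoint (RAS.pathEdges G hG (a i) (b i)) (RAS.pathEdges G hG (a j) (b j))) :
    ∀ S : Finset (Fin υ),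
      RAS.fprob (RAS.poissonPMF G w r) {σ : V → Fin r | ∀ i ∈ S, σ (a i) = σ (b i)} =
        ∏ i ∈ S, RAS.fprob (RAS.poissonPMF G w r) {σ : V → Fin r | σ (a i) = σ (b i)} :=
  agreement_independence_general G hG w r hr υ a b hdisj
end
end

section
/- Let 0 < f, M > 0, K > 0. Let Υ be a nonempty finite set of pairs with associated values d(a,b) ∈ [2f, M], and set u(λ) = |Υ|^{−1} Σ_{(a,b)∈Υ} e^{−λ·d(a,b)}. If 0 ≤ λ' ≤ λ ≤ K and u(λ') − u(λ) ≤ ε for some ε ≥ 0, then λ − λ' ≤ (1/(2f))·ln(1 + ε·e^{KM}). -/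
/-!
For `λ' ≤ λ` and a single value `d ∈ [2f, M]`,
`e^{-λ'd} - e^{-λd} = e^{-λd} (e^{(λ-λ')d} - 1) ≥ e^{-KM} (e^{2f(λ-λ')} - 1)`.
Averaging over `Υ` gives `e^{-KM} (e^{2f(λ-λ')} - 1) ≤ u(λ') - u(λ) ≤ ε`, and solving for `λ - λ'`
yields the bound.
-/

open Real Finset
open scoped BigOperators

lemma exp_neg_mul_sub_exp_neg_mul_eq (a b x : ℝ) :
    exp (-(a * x)) - exp (-(b * x)) = exp (-(b * x)) * (exp (x * (b - a)) - 1) := by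
  rw [mul_sub, ← exp_add, mul_one]
  ring_nf

lemma exp_neg_mul_sub_one_le_exp_neg_mul_sub_exp_neg_mul {a b c x B : ℝ} (hab : a ≤ b)
    (hc : 0 ≤ c) (hcx : c ≤ x) (hbx : b * x ≤ B) :
    exp (-B) * (exp (c * (b - a)) - 1) ≤ exp (-(a * x)) - exp (-(b * x)) := by
  rw [exp_neg_mul_sub_exp_neg_mul_eq]
  gcongr
  exact sub_nonneg.mpr (one_le_exp (mul_nonneg hc (sub_nonneg.mpr hab)))

lemma le_one_div_mul_log_one_add_of_exp_mul_sub_one_le {c δ y : ℝ} (hc : 0 < c)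
    (h : exp (c * δ) - 1 ≤ y) : δ ≤ 1 / c * log (1 + y) := by
  have hlog : c * δ ≤ log (1 + y) :=
    (le_log_iff_exp_le (by linarith [exp_pos (c * δ)])).mpr (by linarith)
  rw [one_div_mul_eq_div, le_div_iff₀ hc, mul_comm]
  exact hlog

theorem scaling_factors_close_of_cluster_means_close_general
    (f M K : ℝ) (hf : 0 < f)
    {ι : Type*} (Υ : Finset ι) (hne : Υ.Nonempty) (d : ι → ℝ)
    (hd : ∀ i ∈ Υ, 2 * f ≤ d i ∧ d i ≤ M)
    (lam lam' ε : ℝ)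
    (h0 : 0 ≤ lam') (h1 : lam' ≤ lam) (h2 : lam ≤ K)
    (hclose : (Υ.card : ℝ)⁻¹ * ∑ i ∈ Υ, exp (-(lam' * d i)) -
        (Υ.card : ℝ)⁻¹ * ∑ i ∈ Υ, exp (-(lam * d i)) ≤ ε) :
    lam - lam' ≤ (1 / (2 * f)) * log (1 + ε * exp (K * M)) := by
  have hpointwise : ∀ i ∈ Υ, exp (-(K * M)) * (exp (2 * f * (lam - lam')) - 1) ≤
      exp (-(lam' * d i)) - exp (-(lam * d i)) := fun i hi ↦ by
    obtain ⟨hfd, hdM⟩ := hd i hi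
    have hd0 : 0 ≤ d i := by linarith
    exact exp_neg_mul_sub_one_le_exp_neg_mul_sub_exp_neg_mul h1 (by positivity) hfd
      (mul_le_mul h2 hdM hd0 (by linarith))
  have hmean : exp (-(K * M)) * (exp (2 * f * (lam - lam')) - 1) ≤ ε :=
    calc _ ≤ 𝔼 i ∈ Υ, (exp (-(lam' * d i)) - exp (-(lam * d i))) := le_expect hne hpointwise
      _ ≤ ε := by simpa only [expect_eq_sum_div_card, div_eq_inv_mul, sum_sub_distrib, mul_sub]
  rw [exp_neg, inv_mul_le_iff₀ (exp_pos _), mul_comm (exp (K * M))] at hmean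
  exact le_one_div_mul_log_one_add_of_exp_mul_sub_one_le (by positivity) hmean

/-- Let `0 < f`, `M > 0`, `K > 0`, let `Υ` be a nonempty
finite set with values `d i ∈ [2f, M]` and `u(λ) = |Υ|⁻¹ Σ_i e^{-λ d i}`.
If `0 ≤ λ' ≤ λ ≤ K` and `u(λ') - u(λ) ≤ ε` with `ε ≥ 0`, then
`λ - λ' ≤ (1/(2f)) ln(1 + ε e^{KM})`. -/
theorem scaling_factors_close_of_cluster_means_close
    (f M K : ℝ) (hf : 0 < f) (hM : 0 < M) (hK : 0 < K)
    {ι : Type*} (Υ : Finset ι) (hne : Υ.Nonempty) (d : ι → ℝ)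
    (hd : ∀ i ∈ Υ, 2 * f ≤ d i ∧ d i ≤ M)
    (lam lam' ε : ℝ) (hε : 0 ≤ ε)
    (h0 : 0 ≤ lam') (h1 : lam' ≤ lam) (h2 : lam ≤ K)
    (hclose : (Υ.card : ℝ)⁻¹ * ∑ i ∈ Υ, exp (-(lam' * d i)) -
        (Υ.card : ℝ)⁻¹ * ∑ i ∈ Υ, exp (-(lam * d i)) ≤ ε) :
    lam - lam' ≤ (1 / (2 * f)) * log (1 + ε * exp (K * M)) :=
  scaling_factors_close_of_cluster_means_close_general f M K hf Υ hne d hd lam lam' ε h0 h1 h2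
    hclose
end
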